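/- arXiv:1511.06865 — 11 statements merged into one kernel-verified Lean document; each statement's English description precedes it below -/
import Mathlib

section
/- For real numbers, the cube root of (2^(1/3) − 1) equals (1/9)^(1/3) − (2/9)^(1/3) + (4/9)^(1/3); that is, (2^(1/3) − 1)^(1/3) = (1/9)^(1/3) − (2/9)^(1/3) + (4/9)^(1/3). -/
theorem ramanujan_cubic_radical :
    ((2:ℝ) ^ ((1:ℝ)/3) - 1) ^ ((1:ℝ)/3)
      = ((1:ℝ)/9) ^ ((1:ℝ)/3) - ((2:ℝ)/9) ^ ((1:ℝ)/3) + ((4:ℝ)/9) ^ ((1:ℝ)/3) := by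
  set c : ℝ := (2:ℝ) ^ ((1:ℝ)/3) with hc
  set t : ℝ := ((1:ℝ)/9) ^ ((1:ℝ)/3) with ht
  have hc3 : c ^ (3:ℕ) = 2 := by
    rw [hc, ← Real.rpow_natCast ((2:ℝ)^((1:ℝ)/3)) 3, ← Real.rpow_mul (by norm_num)]
    norm_num
  have ht3 : t ^ (3:ℕ) = 1/9 := by
    rw [ht, ← Real.rpow_natCast (((1:ℝ)/9)^((1:ℝ)/3)) 3, ← Real.rpow_mul (by norm_num)]
    norm_num
  have h29 : ((2:ℝ)/9) ^ ((1:ℝ)/3) = c * t := by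
    rw [hc, ht, ← Real.mul_rpow (by norm_num) (by norm_num)]; norm_num
  have h49 : ((4:ℝ)/9) ^ ((1:ℝ)/3) = c^2 * t := by
    have h4 : ((4:ℝ)/9) = 2 * (2 * (1/9)) := by norm_num
    rw [hc, ht, h4, Real.mul_rpow (by norm_num) (by norm_num),
      Real.mul_rpow (by norm_num) (by norm_num)]
    ring
  have hcpos : (0:ℝ) < c := Real.rpow_pos_of_pos (by norm_num) _
  have htpos : (0:ℝ) < t := Real.rpow_pos_of_pos (by norm_num) _
  have hq : (0:ℝ) < 1 - c + c^2 := by nlinarith [sq_nonneg (c - 1)]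
  have hrhs_nonneg : 0 ≤ t - c * t + c^2 * t := by nlinarith
  have key : (t - c * t + c^2 * t) ^ (3:ℕ) = c - 1 := by
    have h : (t - c * t + c^2 * t) ^ (3:ℕ) = (1 - c + c^2)^3 * t^(3:ℕ) := by ring
    rw [h, ht3]
    linear_combination ((c^3 - 3*c^2 + 6*c - 5)/9) * hc3
  rw [h29, h49, ← key, ← Real.rpow_natCast (t - c * t + c ^ 2 * t) 3,
    ← Real.rpow_mul hrhs_nonneg]
  norm_num
end

section
/- For real numbers, ((1/16)·(−7 + 3·2^(1/3) + 6·4^(1/3)))^(1/3) = 1 − (1/2)^(1/3) + (1/4)^(1/3) − (1/8)^(1/3) + (1/16)^(1/3). -/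
lemma cube_root_eq {v c : ℝ} (hc : 0 ≤ c) (h : c ^ (3:ℕ) = v) :
    v ^ ((1:ℝ)/3) = c := by
  rw [← h, ← Real.rpow_natCast c 3, ← Real.rpow_mul hc]
  norm_num

theorem nested_radical_five_terms :
    ((1/16 : ℝ) * (-7 + 3 * (2:ℝ) ^ ((1:ℝ)/3) + 6 * (4:ℝ) ^ ((1:ℝ)/3))) ^ ((1:ℝ)/3)
      = 1 - ((1:ℝ)/2) ^ ((1:ℝ)/3) + ((1:ℝ)/4) ^ ((1:ℝ)/3)
        - ((1:ℝ)/8) ^ ((1:ℝ)/3) + ((1:ℝ)/16) ^ ((1:ℝ)/3) := by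
  set a := (2:ℝ) ^ ((1:ℝ)/3) with hadef
  have ha0 : 0 ≤ a := Real.rpow_nonneg (by norm_num) _
  have ha : a ^ (3:ℕ) = 2 := by
    rw [hadef, ← Real.rpow_natCast ((2:ℝ) ^ ((1:ℝ)/3)) 3, ← Real.rpow_mul (by norm_num)]
    norm_num
  have ha2 : a ≤ 2 := by nlinarith [sq_nonneg a, sq_nonneg (a - 2)]
  have h4 : (4:ℝ) ^ ((1:ℝ)/3) = a ^ 2 := by
    apply cube_root_eq (by positivity)
    linear_combination (a ^ 3 + 2) * ha
  have h2 : ((1:ℝ)/2) ^ ((1:ℝ)/3) = a ^ 2 / 2 := by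
    apply cube_root_eq (by positivity)
    linear_combination ((a ^ 3 + 2) / 8) * ha
  have h4' : ((1:ℝ)/4) ^ ((1:ℝ)/3) = a / 2 := by
    apply cube_root_eq (by positivity)
    linear_combination (1/8 : ℝ) * ha
  have h8 : ((1:ℝ)/8) ^ ((1:ℝ)/3) = 1 / 2 := by
    apply cube_root_eq (by norm_num)
    norm_num
  have h16 : ((1:ℝ)/16) ^ ((1:ℝ)/3) = a ^ 2 / 4 := by
    apply cube_root_eq (by positivity)
    linear_combination ((a ^ 3 + 2) / 64) * ha
  rw [h4, h2, h4', h8, h16]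
  apply cube_root_eq
  · nlinarith [sq_nonneg a]
  · linear_combination ((-a ^ 3 + 6 * a ^ 2 - 6 * a - 18) / 64) * ha
end

section
/- For real numbers, ((9/32)·(2^(1/3) − 1))^(1/3) = 1 − (1/2)^(1/3) + (1/4)^(1/3) − (1/8)^(1/3) + (1/16)^(1/3) − (1/32)^(1/3). -/
theorem nested_radical_six_terms :
    ((9/32 : ℝ) * ((2:ℝ) ^ ((1:ℝ)/3) - 1)) ^ ((1:ℝ)/3)
      = 1 - ((1:ℝ)/2) ^ ((1:ℝ)/3) + ((1:ℝ)/4) ^ ((1:ℝ)/3)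
        - ((1:ℝ)/8) ^ ((1:ℝ)/3) + ((1:ℝ)/16) ^ ((1:ℝ)/3) - ((1:ℝ)/32) ^ ((1:ℝ)/3) := by
  set u : ℝ := (2:ℝ) ^ ((1:ℝ)/3) with hu
  have hu0 : 0 < u := Real.rpow_pos_of_pos (by norm_num) _
  have hne : u ≠ 0 := ne_of_gt hu0
  have hu3 : u ^ 3 = 2 := by
    rw [hu, ← Real.rpow_natCast ((2:ℝ) ^ ((1:ℝ)/3)) 3, ← Real.rpow_mul (by norm_num)]
    norm_num
  have hu2 : u < 2 := by nlinarith [sq_nonneg (u - 1), sq_nonneg (u + 1), hu0]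
  have hu1 : 1 < u := by nlinarith [sq_nonneg (u - 1), sq_nonneg (u + 1), hu0]
  have hinv : u⁻¹ = u ^ 2 / 2 := by
    field_simp
    linear_combination -hu3
  -- rewrite all terms as powers of u
  have h2 : ((1:ℝ)/2) ^ ((1:ℝ)/3) = u⁻¹ := by
    rw [one_div, ← Real.rpow_neg_one (2:ℝ), ← Real.rpow_mul (by norm_num : (0:ℝ) ≤ 2),
      hu, ← Real.rpow_neg_one, ← Real.rpow_mul (by norm_num : (0:ℝ) ≤ 2)]
    ring_nf
  have h4 : ((1:ℝ)/4) ^ ((1:ℝ)/3) = u⁻¹ ^ 2 := by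
    have : ((1:ℝ)/4) = ((1:ℝ)/2) ^ (2:ℕ) := by norm_num
    rw [this, ← Real.rpow_natCast ((1:ℝ)/2) 2, ← Real.rpow_mul (by norm_num), mul_comm,
      Real.rpow_mul (by norm_num), h2, Real.rpow_natCast]
  have h8 : ((1:ℝ)/8) ^ ((1:ℝ)/3) = u⁻¹ ^ 3 := by
    have : ((1:ℝ)/8) = ((1:ℝ)/2) ^ (3:ℕ) := by norm_num
    rw [this, ← Real.rpow_natCast ((1:ℝ)/2) 3, ← Real.rpow_mul (by norm_num), mul_comm,
      Real.rpow_mul (by norm_num), h2, Real.rpow_natCast]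
  have h16 : ((1:ℝ)/16) ^ ((1:ℝ)/3) = u⁻¹ ^ 4 := by
    have : ((1:ℝ)/16) = ((1:ℝ)/2) ^ (4:ℕ) := by norm_num
    rw [this, ← Real.rpow_natCast ((1:ℝ)/2) 4, ← Real.rpow_mul (by norm_num), mul_comm,
      Real.rpow_mul (by norm_num), h2, Real.rpow_natCast]
  have h32 : ((1:ℝ)/32) ^ ((1:ℝ)/3) = u⁻¹ ^ 5 := by
    have : ((1:ℝ)/32) = ((1:ℝ)/2) ^ (5:ℕ) := by norm_num
    rw [this, ← Real.rpow_natCast ((1:ℝ)/2) 5, ← Real.rpow_mul (by norm_num), mul_comm,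
      Real.rpow_mul (by norm_num), h2, Real.rpow_natCast]
  rw [h2, h4, h8, h16, h32, hinv]
  have hsum : 1 - u ^ 2 / 2 + (u ^ 2 / 2) ^ 2 - (u ^ 2 / 2) ^ 3 + (u ^ 2 / 2) ^ 4
      - (u ^ 2 / 2) ^ 5 = (2 + u - u ^ 2) / 4 := by
    linear_combination (-(1:ℝ)/4 + u/8 + u^2/8 - u^3/8 - u^4/16 + u^5/16 - u^7/32) * hu3
  rw [hsum]
  have hE0 : 0 ≤ (2 + u - u ^ 2) / 4 := by nlinarith [mul_pos hu0 (sub_pos.2 hu2)]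
  have hcube : ((2 + u - u ^ 2) / 4) ^ (3:ℕ) = (9/32 : ℝ) * (u - 1) := by
    linear_combination ((-u^3 + 3*u^2 + 3*u - 13) / 64) * hu3
  calc ((9/32 : ℝ) * (u - 1)) ^ ((1:ℝ)/3)
      = (((2 + u - u ^ 2) / 4) ^ (3:ℕ)) ^ ((1:ℝ)/3) := by rw [hcube]
    _ = (2 + u - u ^ 2) / 4 := by
        rw [← Real.rpow_natCast ((2 + u - u ^ 2) / 4) 3, ← Real.rpow_mul hE0]
        norm_num
end

section
/- For every positive integer m, the real number S(m) = Σ_{k=0}^{3m−1} (−1)^k · 2^(k/3) satisfies S(m)^3 = (1 − (−2)^m)^3 · (2^(1/3) − 1) / 3. (This is the cube of the finite geometric-series identity ((1/27)·(1 − (−2)^m)^3·(2^(1/3) − 1))^(1/3) = Σ_{k=0}^{3m−1} (−2)^(k/3)/9^(1/3), generalizing Ramanujan's identity, which is the case m = 1.) -/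
/-!
Writing `a = 2^(1/3)`, the sum `S` is the geometric sum `∑_{k<3m} (-a)^k`, so
`S (a + 1) = 1 - (-a)^(3m) = 1 - (-2)^m`. Cubing and multiplying by `a - 1` gives the claim, because
`(a - 1)(a + 1)^3 = 3` whenever `a^3 = 2`.
-/

open Finset

namespace CubeRootTwo

variable {R : Type*} [CommRing R] {a : R}

theorem sub_one_mul_add_one_pow_three (ha : a ^ 3 = 2) : (a - 1) * (a + 1) ^ 3 = 3 := by
  linear_combination (a + 2) * ha

theorem geom_sum_neg_mul_add_one (ha : a ^ 3 = 2) (m : ℕ) :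
    (∑ k ∈ range (3 * m), (-a) ^ k) * (a + 1) = 1 - (-2) ^ m := by
  have hpow : (-a) ^ (3 * m) = (-2) ^ m := by rw [pow_mul, Odd.neg_pow (by decide), ha]
  linear_combination -geom_sum_mul (-a) (3 * m) - hpow

theorem three_mul_geom_sum_neg_pow_three (ha : a ^ 3 = 2) (m : ℕ) :
    3 * (∑ k ∈ range (3 * m), (-a) ^ k) ^ 3 = (1 - (-2) ^ m) ^ 3 * (a - 1) := by
  rw [← geom_sum_neg_mul_add_one ha, ← sub_one_mul_add_one_pow_three ha]
  ring

end CubeRootTwo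

theorem Real.neg_one_pow_mul_rpow_natCast_div {x : ℝ} (hx : 0 ≤ x) (k : ℕ) (y : ℝ) :
    (-1) ^ k * x ^ ((k : ℝ) / y) = (-x ^ (1 / y)) ^ k := by
  rw [neg_pow (x ^ _), ← Real.rpow_mul_natCast hx, one_div_mul_eq_div]

theorem geometric_series_cube_general (m : ℕ) :
    (∑ k ∈ Finset.range (3 * m), (-1 : ℝ) ^ k * (2:ℝ) ^ ((k : ℝ) / 3)) ^ 3
      = (1 - (-2 : ℝ) ^ m) ^ 3 * ((2:ℝ) ^ ((1:ℝ)/3) - 1) / 3 := by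
  have hcube : ((2 : ℝ) ^ ((1 : ℝ) / 3)) ^ 3 = 2 := by
    rw [← Real.rpow_mul_natCast zero_le_two]
    norm_num
  have key := CubeRootTwo.three_mul_geom_sum_neg_pow_three hcube m
  simp_rw [Real.neg_one_pow_mul_rpow_natCast_div zero_le_two _ 3]
  linear_combination key / 3

theorem geometric_series_cube (m : ℕ) (hm : 0 < m) :
    (∑ k ∈ Finset.range (3 * m), (-1 : ℝ) ^ k * (2:ℝ) ^ ((k : ℝ) / 3)) ^ 3
      = (1 - (-2 : ℝ) ^ m) ^ 3 * ((2:ℝ) ^ ((1:ℝ)/3) - 1) / 3 :=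
  geometric_series_cube_general m
end

section
/- For every positive integer m, the real number T(m) = Σ_{j=0}^{3m−1} (−1)^j · 2^(−j/3) satisfies T(m)^3 = (2^m + (−1)^(m+1))^3 · (2^(1/3) − 1) / (3 · 2^(3m−1)). (This is the cube of the identity ((2^m + (−1)^(m+1))^3/(27·2^(3m−1)) · (2^(1/3) − 1))^(1/3) = Σ_{k=−(3m−1)}^{0} (−2)^(k/3)/9^(1/3).) -/
/-! With `a = 2^(1/3)` the summands are the powers of `q = -a⁻¹`, and `q³ = -1/2`, so the geometric
sum equals `(1 - (-1/2)^m) · a / (a + 1)`. Cubing, `a³ = 2` turns the denominator into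
`(a + 1)³ = 3 / (a - 1)`, which produces the factor `(2^(1/3) - 1) / 3`. -/

open Finset

theorem Real.rpow_neg_natCast_div_eq_inv_pow {x : ℝ} (hx : 0 ≤ x) (j n : ℕ) :
    x ^ (-(j : ℝ) / n) = ((x ^ ((1 : ℝ) / n))⁻¹) ^ j := by
  rw [← Real.rpow_neg hx, ← Real.rpow_mul_natCast hx]
  ring_nf

theorem add_one_pow_three_mul_sub_one_of_pow_three_eq_two {R : Type*} [CommRing R] {a : R}
    (ha : a ^ 3 = 2) : (a + 1) ^ 3 * (a - 1) = 3 := by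
  linear_combination (a + 2) * ha

section CubeRootOfTwo

variable {K : Type*} [Field K] [CharZero K] {a : K}

theorem geom_sum_neg_inv_range_three_mul_of_pow_three_eq_two (ha : a ^ 3 = 2) (m : ℕ) :
    ∑ j ∈ range (3 * m), (-a⁻¹) ^ j = (1 - (-2⁻¹) ^ m) * a / (a + 1) := by
  have ha0 : a ≠ 0 := by rintro rfl; norm_num at ha
  have ha1 : a ≠ -1 := by rintro rfl; norm_num at ha
  have hq : -a⁻¹ ≠ 1 := by simpa [neg_eq_iff_eq_neg, inv_eq_iff_eq_inv] using ha1
  have hden : a + 1 ≠ 0 := fun h => ha1 (by linear_combination h)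
  have hq3 : (-a⁻¹) ^ 3 = -2⁻¹ := by rw [neg_pow, inv_pow, ha]; ring
  rw [geom_sum_eq hq, pow_mul, hq3]
  field_simp
  ring

theorem geom_sum_neg_inv_range_three_mul_pow_three_of_pow_three_eq_two (ha : a ^ 3 = 2)
    (m : ℕ) :
    (∑ j ∈ range (3 * m), (-a⁻¹) ^ j) ^ 3 = 2 * (1 - (-2⁻¹) ^ m) ^ 3 * (a - 1) / 3 := by
  have hcube := add_one_pow_three_mul_sub_one_of_pow_three_eq_two ha
  have ha1 : a + 1 ≠ 0 := fun h => by simp [h] at hcube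
  rw [geom_sum_neg_inv_range_three_mul_of_pow_three_eq_two ha, div_pow, mul_pow, ha,
    eq_div_iff three_ne_zero, div_mul_eq_mul_div, div_eq_iff (pow_ne_zero 3 ha1)]
  linear_combination (-2) * (1 - (-2⁻¹) ^ m) ^ 3 * hcube

end CubeRootOfTwo

theorem geometric_series_cube_neg (m : ℕ) (hm : 0 < m) :
    (∑ j ∈ Finset.range (3 * m), (-1 : ℝ) ^ j * (2:ℝ) ^ (-(j : ℝ) / 3)) ^ 3
      = ((2:ℝ) ^ m + (-1 : ℝ) ^ (m + 1)) ^ 3 * ((2:ℝ) ^ ((1:ℝ)/3) - 1)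
        / (3 * (2:ℝ) ^ (3 * m - 1)) := by
  set a : ℝ := (2:ℝ) ^ ((1:ℝ)/3)
  have ha : a ^ 3 = 2 := by
    rw [← Real.rpow_natCast, ← Real.rpow_mul zero_le_two]
    norm_num
  have hsummand (j : ℕ) : (-1 : ℝ) ^ j * (2:ℝ) ^ (-(j : ℝ) / 3) = (-a⁻¹) ^ j := by
    have h := Real.rpow_neg_natCast_div_eq_inv_pow zero_le_two j 3
    rw [Nat.cast_ofNat] at h
    rw [h, ← neg_pow]
  have hpow : (2:ℝ) ^ (3 * m - 1) * 2 = ((2:ℝ) ^ m) ^ 3 := by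
    rw [← pow_succ, ← pow_mul, Nat.sub_add_cancel (by omega), mul_comm]
  simp_rw [hsummand]
  rw [geom_sum_neg_inv_range_three_mul_pow_three_of_pow_three_eq_two ha, neg_pow, inv_pow]
  field_simp
  linear_combination ((2:ℝ) ^ m - (-1) ^ m) ^ 3 * (a - 1) * hpow
end

section
/- The infinite series Σ_{j=0}^{∞} (−1)^j · 2^(−j/3) converges and its sum equals (2·(2^(1/3) − 1)/3)^(1/3); equivalently, ((2/27)·(2^(1/3) − 1))^(1/3) = Σ_{k=−∞}^{0} (−2)^(k/3)/9^(1/3). -/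
theorem geometric_series_infinite :
    HasSum (fun j : ℕ => (-1 : ℝ) ^ j * (2:ℝ) ^ (-(j : ℝ) / 3))
      ((2 * ((2:ℝ) ^ ((1:ℝ)/3) - 1) / 3) ^ ((1:ℝ)/3)) := by
  set a : ℝ := (2:ℝ) ^ ((1:ℝ)/3) with ha
  have ha0 : (0:ℝ) < a := Real.rpow_pos_of_pos (by norm_num) _
  have ha1 : 1 < a := (Real.one_lt_rpow_iff_of_pos (by norm_num)).mpr
    (Or.inl ⟨by norm_num, by norm_num⟩)
  have hacube : a ^ (3:ℕ) = 2 := by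
    rw [ha, ← Real.rpow_natCast (_ ^ _), ← Real.rpow_mul (by norm_num)]
    norm_num
  have habs : |(-(a⁻¹) : ℝ)| < 1 := by
    rw [abs_neg, abs_inv, abs_of_pos ha0]
    exact inv_lt_one_of_one_lt₀ ha1
  have hgeo := hasSum_geometric_of_abs_lt_one habs
  have hterm : ∀ j : ℕ, (-1:ℝ)^j * (2:ℝ) ^ (-(j:ℝ)/3) = (-(a⁻¹))^j := by
    intro j
    have h2 : (2:ℝ) ^ (-(j:ℝ)/3) = (a⁻¹)^j := by
      rw [← Real.rpow_natCast a⁻¹ j, ha, ← Real.rpow_neg (by norm_num : (0:ℝ) ≤ 2),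
        ← Real.rpow_mul (by norm_num)]
      congr 1
      ring
    rw [h2]; ring
  have hs : (0:ℝ) ≤ a / (a + 1) := by positivity
  have hval : (2 * (a - 1) / 3) ^ ((1:ℝ)/3) = (1 - -(a⁻¹))⁻¹ := by
    have hkey : 2 * (a - 1) / 3 = (a / (a + 1)) ^ (3:ℕ) := by
      field_simp
      nlinarith [hacube, ha0, ha1]
    rw [hkey, ← Real.rpow_natCast (a / (a+1)) 3, ← Real.rpow_mul hs]
    norm_num
    field_simp
  rw [hval, show (fun j : ℕ => (-1:ℝ)^j * (2:ℝ) ^ (-(j:ℝ)/3)) = fun j => (-(a⁻¹))^j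
    from funext hterm]
  exact hgeo
end

section
/- For real numbers, √(2 − 2/3^(1/3) + 8/3^(1/6) + 5·3^(1/3)) = 1 + 3^(−1/6) − 3^(1/6) + 3^(1/3) + √3. -/
/-!
Put `t = 3 ^ (1/6)`, so that `3 ^ (1/3) = t²`, `3 ^ (-1/6) = t⁻¹` and `√3 = t³`. Using only
`t⁶ = 3`, the radicand is the square of `1 + t⁻¹ - t + t² + t³`, which is positive for `t > 0`.
-/

theorem sq_one_add_inv_sub_add_sq_add_cube {K : Type*} [Field K] {t : K} (ht : t ≠ 0)
    (ht6 : t ^ 6 = 3) :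
    (1 + t⁻¹ - t + t ^ 2 + t ^ 3) ^ 2 = 2 - 2 / t ^ 2 + 8 / t + 5 * t ^ 2 := by
  field_simp
  linear_combination (t ^ 2 + 2 * t - 1) * ht6

theorem one_add_inv_sub_add_sq_add_cube_pos {t : ℝ} (ht : 0 < t) :
    0 < 1 + t⁻¹ - t + t ^ 2 + t ^ 3 := by
  have : 0 < t⁻¹ + t ^ 3 := by positivity
  nlinarith [sq_nonneg (2 * t - 1)]

theorem nested_radical_three_sixth_roots :
    Real.sqrt (2 - 2 / (3:ℝ) ^ ((1:ℝ)/3) + 8 / (3:ℝ) ^ ((1:ℝ)/6) + 5 * (3:ℝ) ^ ((1:ℝ)/3))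
      = 1 + (3:ℝ) ^ (-(1:ℝ)/6) - (3:ℝ) ^ ((1:ℝ)/6) + (3:ℝ) ^ ((1:ℝ)/3) + Real.sqrt 3 := by
  set t : ℝ := (3:ℝ) ^ ((1:ℝ)/6) with ht
  have h3 : (0:ℝ) ≤ 3 := by norm_num
  have ht0 : 0 < t := by positivity
  have ht6 : t ^ 6 = 3 := by rw [ht, ← Real.rpow_mul_natCast h3]; norm_num
  have ht2 : (3:ℝ) ^ ((1:ℝ)/3) = t ^ 2 := by rw [ht, ← Real.rpow_mul_natCast h3]; norm_num
  have ht3 : Real.sqrt 3 = t ^ 3 := by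
    rw [Real.sqrt_eq_rpow, ht, ← Real.rpow_mul_natCast h3]; norm_num
  have htinv : (3:ℝ) ^ (-(1:ℝ)/6) = t⁻¹ := by rw [ht, ← Real.rpow_neg h3, neg_div]
  rw [ht2, ht3, htinv, ← sq_one_add_inv_sub_add_sq_add_cube ht0.ne' ht6,
    Real.sqrt_sq (one_add_inv_sub_add_sq_add_cube_pos ht0).le]
end

section
/- Let r = (1/9)^(1/3) − (2/9)^(1/3) + (4/9)^(1/3) (so r = (2^(1/3) − 1)^(1/3) by Ramanujan's identity). Then r^4 = (1/9)^(1/3) + 2·(2/9)^(1/3) − 2·(4/9)^(1/3), r^5 = 9^(1/3) − (2/3)^(1/3) − (4/3)^(1/3), and r^6 = 1 − 2·2^(1/3) + 4^(1/3). Equivalently, the fourth root of the first expression, the fifth root of the second, and the sixth root of the third are all equal. -/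
/-!
Write `a = 2^(1/3)` and `b = 3^(1/3)`; every radical in the statement is a monomial in `a`, `b`,
`b⁻¹`. Since `(1 + a)(1 - a + a²) = 1 + a³ = 3 = b³`, the number `r = (1 - a + a²)/b²` equals
`b/(1 + a)`, and `(1 + a)³ = 3(1 + a + a²)` gives `r³ = 1/(1 + a + a²) = a - 1` (Ramanujan's
identity). Each of the three claimed powers is then `r³ · rᵏ` reduced modulo `a³ = 2`, `b³ = 3`.
-/

lemma Real.rpow_one_div_natCast_eq_of_pow_eq {x y : ℝ} {n : ℕ} (hn : n ≠ 0) (hy : 0 ≤ y)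
    (h : y ^ n = x) : x ^ ((1 : ℝ) / n) = y := by
  rw [← h, one_div, Real.pow_rpow_inv_natCast hy hn]

lemma Real.rpow_one_div_three_eq_of_pow_eq {x y : ℝ} (hy : 0 ≤ y) (h : y ^ 3 = x) :
    x ^ ((1 : ℝ) / 3) = y := by
  simpa using Real.rpow_one_div_natCast_eq_of_pow_eq three_ne_zero hy h

lemma one_add_ne_zero_of_pow_three_eq_two {a : ℝ} (ha : a ^ 3 = 2) : 1 + a ≠ 0 := by
  intro h
  obtain rfl : a = -1 := by linarith
  norm_num at ha

section Ramanujan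

variable {a b : ℝ} (ha : a ^ 3 = 2) (hb : b ^ 3 = 3)
include ha hb

lemma one_sub_add_sq_div_sq_eq_div_one_add : (1 - a + a ^ 2) / b ^ 2 = b / (1 + a) := by
  have hb0 : b ≠ 0 := by rintro rfl; norm_num at hb
  have := one_add_ne_zero_of_pow_three_eq_two ha
  field_simp
  linear_combination ha - hb

lemma div_one_add_pow_three_eq_sub_one : (b / (1 + a)) ^ 3 = a - 1 := by
  have := one_add_ne_zero_of_pow_three_eq_two ha
  field_simp
  linear_combination hb - (a + 2) * ha

end Ramanujan

theorem ramanujan_powers_four_five_six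
    (r : ℝ)
    (hr : r = ((1:ℝ)/9) ^ ((1:ℝ)/3) - ((2:ℝ)/9) ^ ((1:ℝ)/3) + ((4:ℝ)/9) ^ ((1:ℝ)/3)) :
    r ^ 4 = ((1:ℝ)/9) ^ ((1:ℝ)/3) + 2 * ((2:ℝ)/9) ^ ((1:ℝ)/3) - 2 * ((4:ℝ)/9) ^ ((1:ℝ)/3)
    ∧ r ^ 5 = (9:ℝ) ^ ((1:ℝ)/3) - ((2:ℝ)/3) ^ ((1:ℝ)/3) - ((4:ℝ)/3) ^ ((1:ℝ)/3)
    ∧ r ^ 6 = 1 - 2 * (2:ℝ) ^ ((1:ℝ)/3) + (4:ℝ) ^ ((1:ℝ)/3) := by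
  have cbrt := @Real.rpow_one_div_three_eq_of_pow_eq
  have ha : ((2:ℝ) ^ ((1:ℝ)/3)) ^ 3 = 2 := by
    simpa using Real.rpow_inv_natCast_pow (x := 2) (n := 3) (by norm_num) (by norm_num)
  have hb : ((3:ℝ) ^ ((1:ℝ)/3)) ^ 3 = 3 := by
    simpa using Real.rpow_inv_natCast_pow (x := 3) (n := 3) (by norm_num) (by norm_num)
  set a := (2:ℝ) ^ ((1:ℝ)/3)
  set b := (3:ℝ) ^ ((1:ℝ)/3)
  have ha0 : 0 ≤ a := by positivity
  have hb0 : 0 < b := by positivity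
  rw [cbrt (x := 1/9) (y := 1/b^2) (by positivity) (by grind),
    cbrt (x := 2/9) (y := a/b^2) (by positivity) (by grind),
    cbrt (x := 4/9) (y := a^2/b^2) (by positivity) (by grind)] at hr ⊢
  rw [cbrt (x := 9) (y := b^2) (by positivity) (by grind),
    cbrt (x := 2/3) (y := a/b) (by positivity) (by grind),
    cbrt (x := 4/3) (y := a^2/b) (by positivity) (by grind),
    cbrt (x := 4) (y := a^2) (by positivity) (by grind)]
  have hr_eq : r = b / (1 + a) := by
    rw [hr, ← one_sub_add_sq_div_sq_eq_div_one_add ha hb]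
    ring
  have hr3 : r ^ 3 = a - 1 := hr_eq ▸ div_one_add_pow_three_eq_sub_one ha hb
  have ha1 := one_add_ne_zero_of_pow_three_eq_two ha
  refine ⟨?_, ?_, ?_⟩
  · rw [show r ^ 4 = r ^ 3 * r by ring, hr3, hr]
    linear_combination (1 / b ^ 2) * ha
  · rw [show r ^ 5 = r ^ 3 * r ^ 2 by ring, hr3, hr_eq]
    field_simp
    linear_combination (a + 3) * ha - (2 + a + a ^ 2) * hb
  · rw [show r ^ 6 = (r ^ 3) ^ 2 by ring, hr3]
    ring
end

section
/- Let r = (1/9)^(1/3) − (2/9)^(1/3) + (4/9)^(1/3). Then r^15 = 19 − 5·2^(1/3) − 8·4^(1/3); equivalently, (19 − 5·2^(1/3) − 8·4^(1/3))^(1/15) = (1/9)^(1/3) − (2/9)^(1/3) + (4/9)^(1/3). -/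
theorem ramanujan_power_fifteen
    (r : ℝ)
    (hr : r = ((1:ℝ)/9) ^ ((1:ℝ)/3) - ((2:ℝ)/9) ^ ((1:ℝ)/3) + ((4:ℝ)/9) ^ ((1:ℝ)/3)) :
    r ^ 15 = 19 - 5 * (2:ℝ) ^ ((1:ℝ)/3) - 8 * (4:ℝ) ^ ((1:ℝ)/3) := by
  set t : ℝ := (2:ℝ) ^ ((1:ℝ)/3) with htdef
  set u : ℝ := ((1:ℝ)/9) ^ ((1:ℝ)/3) with hudef
  have ht : t ^ 3 = 2 := by
    rw [htdef, ← Real.rpow_natCast ((2:ℝ) ^ ((1:ℝ)/3)) 3,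
      ← Real.rpow_mul (by norm_num : (0:ℝ) ≤ 2)]
    norm_num
  have hu : u ^ 3 = 1/9 := by
    rw [hudef, ← Real.rpow_natCast (((1:ℝ)/9) ^ ((1:ℝ)/3)) 3,
      ← Real.rpow_mul (by norm_num : (0:ℝ) ≤ 1/9)]
    norm_num
  have h2 : ((2:ℝ)/9) ^ ((1:ℝ)/3) = t * u := by
    rw [htdef, hudef, ← Real.mul_rpow (by norm_num) (by norm_num)]
    norm_num
  have h4 : ((4:ℝ)/9) ^ ((1:ℝ)/3) = t * (t * u) := by
    rw [show (4:ℝ)/9 = 2 * (2/9) by norm_num,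
      Real.mul_rpow (by norm_num) (by norm_num), h2, ← htdef]
  have h4' : (4:ℝ) ^ ((1:ℝ)/3) = t * t := by
    rw [show (4:ℝ) = 2 * 2 by norm_num,
      Real.mul_rpow (by norm_num) (by norm_num), ← htdef]
  rw [hr, h2, h4, h4']
  have key : (u - t * u + t * (t * u)) ^ 15 = (1/59049) * (1 - t + t^2) ^ 15 := by
    have h : (u - t * u + t * (t * u)) ^ 15 = (u^3)^5 * (1 - t + t^2) ^ 15 := by ring
    rw [h, hu]; norm_num
  rw [key]
  linear_combination (((560965:ℝ) - (147615:ℝ) * t^1 - (236256:ℝ) * t^2 + (280815:ℝ) * t^3 - (75225:ℝ) * t^4 - (113214:ℝ) * t^5 + (126075:ℝ) * t^6 - (1635:ℝ) * t^7 - (135582:ℝ) * t^8 + (216405:ℝ) * t^9 - (266583:ℝ) * t^10 + (345804:ℝ) * t^11 - (472605:ℝ) * t^12 + (605226:ℝ) * t^13 - (679353:ℝ) * t^14 + (657501:ℝ) * t^15 - (549642:ℝ) * t^16 + (398841:ℝ) * t^17 - (252057:ℝ) * t^18 + (138774:ℝ) * t^19 - (66345:ℝ) * t^20 + (27339:ℝ)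 * t^21 - (9588:ℝ) * t^22 + (2805:ℝ) * t^23 - (663:ℝ) * t^24 + (120:ℝ) * t^25 - (15:ℝ) * t^26 + (1:ℝ) * t^27) / 59049) * ht
end

section
/- Let r = (1/9)^(1/3) − (2/9)^(1/3) + (4/9)^(1/3). Then r^24 = 1 + 100·2^(1/3) − 80·4^(1/3); equivalently, (1 + 100·2^(1/3) − 80·4^(1/3))^(1/24) = (1/9)^(1/3) − (2/9)^(1/3) + (4/9)^(1/3). -/
theorem ramanujan_power_twentyfour
    (r : ℝ)
    (hr : r = ((1:ℝ)/9) ^ ((1:ℝ)/3) - ((2:ℝ)/9) ^ ((1:ℝ)/3) + ((4:ℝ)/9) ^ ((1:ℝ)/3)) :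
    r ^ 24 = 1 + 100 * (2:ℝ) ^ ((1:ℝ)/3) - 80 * (4:ℝ) ^ ((1:ℝ)/3) := by
  set a := (2:ℝ) ^ ((1:ℝ)/3) with haa
  set b := (3:ℝ) ^ ((1:ℝ)/3) with hbb
  have ha0 : 0 ≤ a := Real.rpow_nonneg (by norm_num) _
  have hb0 : 0 ≤ b := Real.rpow_nonneg (by norm_num) _
  have ha3 : a ^ 3 = 2 := by
    rw [haa, ← Real.rpow_natCast (_ ^ _) 3, ← Real.rpow_mul (by norm_num)]
    norm_num
  have hb3 : b ^ 3 = 3 := by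
    rw [hbb, ← Real.rpow_natCast (_ ^ _) 3, ← Real.rpow_mul (by norm_num)]
    norm_num
  have hbne : b ≠ 0 := by
    intro h; rw [h] at hb3; norm_num at hb3
  have hb6 : b ^ 6 = 9 := by
    have : b ^ 6 = (b ^ 3) ^ 2 := by ring
    rw [this, hb3]; norm_num
  have cube_eq : ∀ x y : ℝ, 0 ≤ x → 0 ≤ y → x ^ (3:ℕ) = y → x = y ^ ((1:ℝ)/3) := by
    intro x y hx hy hxy
    rw [← hxy, ← Real.rpow_natCast x 3, ← Real.rpow_mul hx]
    norm_num
  have h1 : ((1:ℝ)/9) ^ ((1:ℝ)/3) = 1 / b ^ 2 := by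
    refine (cube_eq (1 / b ^ 2) ((1:ℝ)/9) (by positivity) (by norm_num) ?_).symm
    field_simp
    linear_combination (b ^ 3 + 3) * hb3 - 2 * hb6
  have h2 : ((2:ℝ)/9) ^ ((1:ℝ)/3) = a / b ^ 2 := by
    refine (cube_eq (a / b ^ 2) ((2:ℝ)/9) (by positivity) (by norm_num) ?_).symm
    field_simp
    linear_combination (b ^ 3 + 3) * 2 * hb3 + (9 : ℝ) * ha3 - 4 * hb6
  have h4 : ((4:ℝ)/9) ^ ((1:ℝ)/3) = a ^ 2 / b ^ 2 := by
    refine (cube_eq (a ^ 2 / b ^ 2) ((4:ℝ)/9) (by positivity) (by norm_num) ?_).symm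
    field_simp
    linear_combination (b ^ 3 + 3) * 4 * hb3 + (9 * a ^ 3 + 18 : ℝ) * ha3 - 8 * hb6
  have h4' : (4:ℝ) ^ ((1:ℝ)/3) = a ^ 2 := by
    refine (cube_eq (a ^ 2) 4 (by positivity) (by norm_num) ?_).symm
    linear_combination (a ^ 3 + 2) * ha3
  rw [h1, h2, h4] at hr
  rw [h4']
  have hr3 : r ^ 3 = a - 1 := by
    rw [hr]
    field_simp
    ring_nf
    linear_combination (a ^ 3 - 3 * a ^ 2 + 6 * a - 5) * ha3 + (a - 1) * 3 * hb3 + (a-1) * (b^3) * hb3 + (2 - 2*a) * hb6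
  calc r ^ 24 = (r ^ 3) ^ 8 := by ring
    _ = (a - 1) ^ 8 := by rw [hr3]
    _ = 1 + 100 * a - 80 * a ^ 2 := by
        linear_combination (a ^ 5 - 8 * a ^ 4 + 28 * a ^ 3 - 54 * a ^ 2 + 54 * a) * ha3
end

section
/- For real numbers, the tenth power of (5/3)·((5/2)^(1/3) − (1/5)^(1/3) + (1/5)·2^(1/3)) equals (1/24)·(164420·25^(1/3) − 96925·(5/2)^(1/3) − 273167·2^(1/3)); equivalently, ((1/24)·(164420·25^(1/3) − 96925·(5/2)^(1/3) − 273167·2^(1/3)))^(1/10) = (5/3)·((5/2)^(1/3) − (1/5)^(1/3) + (1/5)·2^(1/3)). -/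
theorem nested_radical_tenth_power :
    ((5:ℝ)/3 * (((5:ℝ)/2) ^ ((1:ℝ)/3) - ((1:ℝ)/5) ^ ((1:ℝ)/3) + (1/5) * (2:ℝ) ^ ((1:ℝ)/3))) ^ 10
      = (1/24 : ℝ) * (164420 * (25:ℝ) ^ ((1:ℝ)/3) - 96925 * ((5:ℝ)/2) ^ ((1:ℝ)/3)
          - 273167 * (2:ℝ) ^ ((1:ℝ)/3)) := by
  set a := (2:ℝ) ^ ((1:ℝ)/3) with hadef
  set b := (5:ℝ) ^ ((1:ℝ)/3) with hbdef
  have ha0 : 0 < a := Real.rpow_pos_of_pos (by norm_num) _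
  have hb0 : 0 < b := Real.rpow_pos_of_pos (by norm_num) _
  have ha : a ^ 3 = 2 := by
    rw [hadef, ← Real.rpow_natCast ((2:ℝ) ^ ((1:ℝ)/3)) 3, ← Real.rpow_mul (by norm_num)]
    norm_num
  have hb : b ^ 3 = 5 := by
    rw [hbdef, ← Real.rpow_natCast ((5:ℝ) ^ ((1:ℝ)/3)) 3, ← Real.rpow_mul (by norm_num)]
    norm_num
  have h52 : ((5:ℝ)/2) ^ ((1:ℝ)/3) = b * a ^ 2 / 2 := by
    rw [Real.div_rpow (by norm_num) (by norm_num), div_eq_div_iff ha0.ne' (by norm_num), ← hbdef]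
    linear_combination (-b) * ha
  have h15 : ((1:ℝ)/5) ^ ((1:ℝ)/3) = b ^ 2 / 5 := by
    rw [Real.div_rpow (by norm_num) (by norm_num), Real.one_rpow,
      div_eq_div_iff hb0.ne' (by norm_num)]
    linear_combination -hb
  have h25 : (25:ℝ) ^ ((1:ℝ)/3) = b ^ 2 := by
    rw [show (25:ℝ) = 5 ^ (2:ℕ) by norm_num, ← Real.rpow_natCast (5:ℝ) 2,
      ← Real.rpow_mul (by norm_num), hbdef, ← Real.rpow_natCast ((5:ℝ) ^ ((1:ℝ)/3)) 2,
      ← Real.rpow_mul (by norm_num)]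
    norm_num
  rw [h52, h15, h25]
  linear_combination ((2210/59049:ℝ) * b^2 + (97450/19683:ℝ) * b^5 + (-432505/157464:ℝ) * b^8 + (4658975/472392:ℝ) * b^11 + (305215/78732:ℝ) * b^14 + (-1175/19683:ℝ) * b^17 + (4/59049:ℝ) * a^1 + (4700/19683:ℝ) * a^1 * b^3 + (305215/39366:ℝ) * a^1 * b^6 + (-4658975/472392:ℝ) * a^1 * b^9 + (-432505/314928:ℝ) * a^1 * b^12 + (-48725/39366:ℝ) * a^1 * b^15 + (125/26244:ℝ) * a^1 * b^18 + (100/59049:ℝ) * a^2 * b^1 + (18905/19683:ℝ) * a^2 * b^4 + (113600/19683:ℝ) * a^2 * b^7 + (-1544939/1889568:ℝ) * a^2 * b^10 + (-56800/19683:ℝ) * a^2 * b^13 + (18875/78732:ℝ) * a^2 * b^16 + (1105/59049:ℝ) * a^3 * b^2 + (48725/19683:ℝ) * a^3 * b^5 + (-432505/314928:ℝ) * a^3 * b^8 + (4658975/944784:ℝ) * a^3 * b^11 + (305375/157464:ℝ) * a^3 * b^14 + (-625/19683:ℝ) * a^3 * b^17 + (2/59049:ℝ) * a^4 + (2350/19683:ℝ)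 * a^4 * b^3 + (305215/78732:ℝ) * a^4 * b^6 + (-4658975/944784:ℝ) * a^4 * b^9 + (-433625/629856:ℝ) * a^4 * b^12 + (-48125/78732:ℝ) * a^4 * b^15 + (50/59049:ℝ) * a^5 * b^1 + (18905/39366:ℝ) * a^5 * b^4 + (56800/19683:ℝ) * a^5 * b^7 + (-1536875/3779136:ℝ) * a^5 * b^10 + (-28750/19683:ℝ) * a^5 * b^13 + (21875/157464:ℝ) * a^5 * b^16 + (1105/118098:ℝ) * a^6 * b^2 + (48725/39366:ℝ) * a^6 * b^5 + (-433625/629856:ℝ) * a^6 * b^8 + (4709375/1889568:ℝ) * a^6 * b^11 + (284375/314928:ℝ) * a^6 * b^14 + (1/59049:ℝ) * a^7 + (1175/19683:ℝ) * a^7 * b^3 + (305375/157464:ℝ) * a^7 * b^6 + (-4709375/1889568:ℝ) * a^7 * b^9 + (-265625/1259712:ℝ) * a^7 * b^12 + (-21875/52488:ℝ) * a^7 * b^15 + (25/59049:ℝ) * a^8 * b^1 + (18875/78732:ℝ) * a^8 * b^4 + (28750/19683:ℝ) * a^8 * b^7 + (-2796875/7558272:ℝ) * a^8 * b^10 + (-15625/39366:ℝ)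 * a^8 * b^13 + (125/26244:ℝ) * a^9 * b^2 + (48125/78732:ℝ) * a^9 * b^5 + (-265625/1259712:ℝ) * a^9 * b^8 + (2609375/3779136:ℝ) * a^9 * b^11 + (546875/629856:ℝ) * a^9 * b^14 + (625/19683:ℝ) * a^10 * b^3 + (284375/314928:ℝ) * a^10 * b^6 + (-2609375/3779136:ℝ) * a^10 * b^9 + (-2890625/2519424:ℝ) * a^10 * b^12 + (21875/157464:ℝ) * a^11 * b^4 + (15625/39366:ℝ) * a^11 * b^7 + (18203125/15116544:ℝ) * a^11 * b^10 + (-390625/314928:ℝ) * a^11 * b^13 + (21875/52488:ℝ) * a^12 * b^5 + (-2890625/2519424:ℝ) * a^12 * b^8 + (18359375/7558272:ℝ) * a^12 * b^11 + (546875/629856:ℝ) * a^13 * b^6 + (-18359375/7558272:ℝ) * a^13 * b^9 + (1953125/1679616:ℝ) * a^13 * b^12 + (390625/314928:ℝ) * a^14 * b^7 + (-60546875/30233088:ℝ) * a^14 * b^10 + (1953125/1679616:ℝ) * a^15 * b^8 + (-9765625/15116544:ℝ) * a^15 * b^11 + (9765625/15116544:ℝ) * a^16 * b^9 + (9765625/60466176:ℝ)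 * a^17 * b^10) * ha + ((161812175/118098:ℝ) * b^2 + (32128555/118098:ℝ) * b^5 + (13110925/236196:ℝ) * b^8 + (845195/118098:ℝ) * b^11 + (-7045/59049:ℝ) * b^14 + (1/59049:ℝ) * b^17 + (-1075349225/472392:ℝ) * a^1 + (-215114965/472392:ℝ) * a^1 * b^3 + (-44488025/472392:ℝ) * a^1 * b^6 + (-7034015/472392:ℝ) * a^1 * b^9 + (-286825/118098:ℝ) * a^1 * b^12 + (1105/118098:ℝ) * a^1 * b^15 + (-381555595/944784:ℝ) * a^2 * b^1 + (-76674095/944784:ℝ) * a^2 * b^4 + (-17515939/944784:ℝ) * a^2 * b^7 + (-399275/118098:ℝ) * a^2 * b^10 + (56465/118098:ℝ) * a^2 * b^13 + (-25/59049:ℝ) * a^2 * b^16) * hb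
end
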